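/- Let n, m be positive integers, let Θ be a Hermitian 2n×2n complex matrix, M a Hermitian 2n×2n complex matrix, and N a 2m×2n complex matrix. Define A = −iΘM − (1/2)ΘN†J_m N, B = −ΘN†J_m, and C = N. Then AΘ + ΘA† + B J_m B† = 0 and B = −ΘC†J_m. -/

import Mathlib

open Matrix

/-- The matrix `J_k = diag(I_k, -I_k)`. -/
noncomputable def Jmat (k : ℕ) : Matrix (Fin k ⊕ Fin k) (Fin k ⊕ Fin k) ℂ :=
  fromBlocks 1 0 0 (-1)

lemma Jmat_isHermitian (k : ℕ) : (Jmat k).IsHermitian := by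
  simp [IsHermitian, Jmat, fromBlocks_conjTranspose]

lemma Jmat_mul_self (k : ℕ) : Jmat k * Jmat k = 1 := by
  simp [Jmat, fromBlocks_multiply, ← fromBlocks_one]

section Lyapunov

variable {ι κ : Type*} [Fintype ι] [Fintype κ] [DecidableEq κ]

/-- `(-iΘM)† = iMΘ`, so the Hamiltonian part of the drift cancels against its adjoint. -/
lemma hamiltonian_drift_lyapunov_eq_zero {Θ M : Matrix ι ι ℂ}
    (hΘ : Θ.IsHermitian) (hM : M.IsHermitian) :
    (-Complex.I • (Θ * M)) * Θ + Θ * (-Complex.I • (Θ * M))ᴴ = 0 := by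
  rw [conjTranspose_smul, conjTranspose_mul, hΘ.eq, hM.eq, star_neg, Complex.star_def,
    Complex.conj_I, neg_neg, Matrix.mul_smul, smul_mul, Matrix.mul_assoc, neg_smul,
    neg_add_cancel]

/-- Each of the three terms is a multiple of `ΘN†JNΘ`; the noise term uses `J J J† = J`. -/
lemma coupling_drift_lyapunov_add_noise_eq_zero {Θ : Matrix ι ι ℂ} {N : Matrix κ ι ℂ}
    {J : Matrix κ κ ℂ} (hΘ : Θ.IsHermitian) (hJ : J.IsHermitian) (hJJ : J * J = 1) :
    -((1 / 2 : ℂ) • (Θ * Nᴴ * J * N)) * Θ + Θ * (-((1 / 2 : ℂ) • (Θ * Nᴴ * J * N)))ᴴ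
      + -(Θ * Nᴴ * J) * J * (-(Θ * Nᴴ * J))ᴴ = 0 := by
  have hnoise : -(Θ * Nᴴ * J) * J * (-(Θ * Nᴴ * J))ᴴ = Θ * Nᴴ * J * N * Θ := by
    simp only [conjTranspose_neg, conjTranspose_mul, conjTranspose_conjTranspose, hΘ.eq,
      hJ.eq, Matrix.neg_mul, Matrix.mul_neg, neg_neg, Matrix.mul_assoc]
    rw [← Matrix.mul_assoc J J, hJJ, Matrix.one_mul]
  rw [hnoise]
  simp only [conjTranspose_neg, conjTranspose_smul, conjTranspose_mul,
    conjTranspose_conjTranspose, hΘ.eq, hJ.eq, Matrix.neg_mul, Matrix.mul_neg, smul_mul,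
    Matrix.mul_smul, Matrix.mul_assoc, one_div, star_inv₀, star_ofNat]
  module

end Lyapunov

theorem realizability_constraints_of_hamiltonian_coupling_general
    (n m : ℕ)
    (Θ M : Matrix (Fin n ⊕ Fin n) (Fin n ⊕ Fin n) ℂ)
    (hΘ : Θ.IsHermitian) (hM : M.IsHermitian)
    (N : Matrix (Fin m ⊕ Fin m) (Fin n ⊕ Fin n) ℂ)
    (A : Matrix (Fin n ⊕ Fin n) (Fin n ⊕ Fin n) ℂ)
    (B : Matrix (Fin n ⊕ Fin n) (Fin m ⊕ Fin m) ℂ)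
    (C : Matrix (Fin m ⊕ Fin m) (Fin n ⊕ Fin n) ℂ)
    (hA : A = (-Complex.I) • (Θ * M) - (1 / 2 : ℂ) • (Θ * Nᴴ * Jmat m * N))
    (hB : B = -(Θ * Nᴴ * Jmat m))
    (hC : C = N) :
    A * Θ + Θ * Aᴴ + B * Jmat m * Bᴴ = 0 ∧ B = -(Θ * Cᴴ * Jmat m) := by
  subst hB
  refine ⟨?_, by rw [hC]⟩
  set A₀ : Matrix (Fin n ⊕ Fin n) (Fin n ⊕ Fin n) ℂ := -Complex.I • (Θ * M)
  set A₁ : Matrix (Fin n ⊕ Fin n) (Fin n ⊕ Fin n) ℂ := -((1 / 2 : ℂ) • (Θ * Nᴴ * Jmat m * N))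
  have hA' : A = A₀ + A₁ := by rw [hA, sub_eq_add_neg]
  calc A * Θ + Θ * Aᴴ + -(Θ * Nᴴ * Jmat m) * Jmat m * (-(Θ * Nᴴ * Jmat m))ᴴ
      = (A₀ * Θ + Θ * A₀ᴴ)
        + (A₁ * Θ + Θ * A₁ᴴ + -(Θ * Nᴴ * Jmat m) * Jmat m * (-(Θ * Nᴴ * Jmat m))ᴴ) := by
        rw [hA', conjTranspose_add, Matrix.add_mul, Matrix.mul_add]
        abel
    _ = 0 := by
      rw [hamiltonian_drift_lyapunov_eq_zero hΘ hM, zero_add]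
      exact coupling_drift_lyapunov_add_noise_eq_zero hΘ (Jmat_isHermitian m) (Jmat_mul_self m)

theorem realizability_constraints_of_hamiltonian_coupling
    (n m : ℕ) (hn : 0 < n) (hm : 0 < m)
    (Θ M : Matrix (Fin n ⊕ Fin n) (Fin n ⊕ Fin n) ℂ)
    (hΘ : Θ.IsHermitian) (hM : M.IsHermitian)
    (N : Matrix (Fin m ⊕ Fin m) (Fin n ⊕ Fin n) ℂ)
    (A : Matrix (Fin n ⊕ Fin n) (Fin n ⊕ Fin n) ℂ)
    (B : Matrix (Fin n ⊕ Fin n) (Fin m ⊕ Fin m) ℂ)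
    (C : Matrix (Fin m ⊕ Fin m) (Fin n ⊕ Fin n) ℂ)
    (hA : A = (-Complex.I) • (Θ * M) - (1 / 2 : ℂ) • (Θ * Nᴴ * Jmat m * N))
    (hB : B = -(Θ * Nᴴ * Jmat m))
    (hC : C = N) :
    A * Θ + Θ * Aᴴ + B * Jmat m * Bᴴ = 0 ∧ B = -(Θ * Cᴴ * Jmat m) :=
  realizability_constraints_of_hamiltonian_coupling_general n m Θ M hΘ hM N A B C hA hB hC
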